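/- Correctness of the formula automaton: for a quantifier-free HyperLTL formula ψ in negation normal form over trace variables π₁, …, πₙ and its generalized Büchi automaton A_ψ, and for every n-tuple Π of traces, it holds that Π ⊨_∅ ψ if and only if zip(Π) ∈ L(A_ψ). -/
import Mathlib


/-- n-tuples of traces over the atomic propositions `AP`, indexed by the trace variables
`π₁, …, πₙ` (represented by `Fin n`). -/
abbrev TTuple (AP : Type) (n : ℕ) := Fin n → ℕ → Set AP

/-- The suffix `Π[i,∞]` of a tuple of traces. -/
def TTuple.drop {AP : Type} {n : ℕ} (Pa : TTuple AP n) (i : ℕ) : TTuple AP n :=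
  fun j m => Pa j (i + m)

/-- Quantifier-free HyperLTL formulas over trace variables `π₁, …, πₙ`, built from
indexed atomic propositions, negation, ∨, ∧, ○, U and R. -/
inductive QF (AP : Type) (n : ℕ) : Type where
  | atom : AP → Fin n → QF AP n
  | neg  : QF AP n → QF AP n
  | or   : QF AP n → QF AP n → QF AP n
  | and  : QF AP n → QF AP n → QF AP n
  | next : QF AP n → QF AP n
  | untl : QF AP n → QF AP n → QF AP n
  | rels : QF AP n → QF AP n → QF AP n

namespace QF

variable {AP : Type} {n : ℕ}

/-- Negation normal form: negation is applied only to atomic propositions. -/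
def NNF : QF AP n → Prop
  | neg (atom _ _) => True
  | neg _ => False
  | atom _ _ => True
  | or φ ψ => NNF φ ∧ NNF ψ
  | and φ ψ => NNF φ ∧ NNF ψ
  | next φ => NNF φ
  | untl φ ψ => NNF φ ∧ NNF ψ
  | rels φ ψ => NNF φ ∧ NNF ψ

/-- Negation, identifying `¬¬φ` with `φ`. -/
def negF : QF AP n → QF AP n
  | neg φ => φ
  | φ => neg φ

/-- Satisfaction `Π ⊨_∅ φ` of a quantifier-free formula by an n-tuple of traces
(`φ₁ R φ₂ ≡ ¬(¬φ₁ U ¬φ₂)`). -/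
def sat : TTuple AP n → QF AP n → Prop
  | Pa, atom a j => a ∈ Pa j 0
  | Pa, neg φ => ¬ sat Pa φ
  | Pa, or φ ψ => sat Pa φ ∨ sat Pa ψ
  | Pa, and φ ψ => sat Pa φ ∧ sat Pa ψ
  | Pa, next φ => sat (Pa.drop 1) φ
  | Pa, untl φ ψ => ∃ i, sat (Pa.drop i) ψ ∧ ∀ j < i, sat (Pa.drop j) φ
  | Pa, rels φ ψ => ¬ ∃ i, ¬ sat (Pa.drop i) ψ ∧ ∀ j < i, ¬ sat (Pa.drop j) φ

/-- The closure `cl(ψ)`: the least set of subformulas of ψ closed under the given rules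
(negation is taken up to the identification `¬¬φ = φ`). -/
inductive Cl (ψ : QF AP n) : QF AP n → Prop where
  | base : Cl ψ ψ
  | negc {φ} : Cl ψ φ → Cl ψ (negF φ)
  | or_left {φ₁ φ₂} : Cl ψ (QF.or φ₁ φ₂) → Cl ψ φ₁
  | or_right {φ₁ φ₂} : Cl ψ (QF.or φ₁ φ₂) → Cl ψ φ₂
  | and_left {φ₁ φ₂} : Cl ψ (QF.and φ₁ φ₂) → Cl ψ φ₁
  | and_right {φ₁ φ₂} : Cl ψ (QF.and φ₁ φ₂) → Cl ψ φ₂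
  | next_sub {φ} : Cl ψ (QF.next φ) → Cl ψ φ
  | untl_left {φ₁ φ₂} : Cl ψ (QF.untl φ₁ φ₂) → Cl ψ φ₁
  | untl_right {φ₁ φ₂} : Cl ψ (QF.untl φ₁ φ₂) → Cl ψ φ₂
  | rels_left {φ₁ φ₂} : Cl ψ (QF.rels φ₁ φ₂) → Cl ψ φ₁
  | rels_right {φ₁ φ₂} : Cl ψ (QF.rels φ₁ φ₂) → Cl ψ φ₂

/-- Maximal consistent sets with respect to `cl(ψ)`. -/
structure Mcs (ψ : QF AP n) (s : Set (QF AP n)) : Prop where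
  subset : ∀ φ ∈ s, Cl ψ φ
  maximal : ∀ φ, Cl ψ φ → (φ ∈ s ↔ negF φ ∉ s)
  and_mem : ∀ φ₁ φ₂, Cl ψ (QF.and φ₁ φ₂) → (QF.and φ₁ φ₂ ∈ s ↔ φ₁ ∈ s ∧ φ₂ ∈ s)
  or_mem : ∀ φ₁ φ₂, Cl ψ (QF.or φ₁ φ₂) → (QF.or φ₁ φ₂ ∈ s ↔ φ₁ ∈ s ∨ φ₂ ∈ s)
  untl_mem : ∀ φ₁ φ₂, QF.untl φ₁ φ₂ ∈ s → φ₁ ∈ s ∨ φ₂ ∈ s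
  rels_mem : ∀ φ₁ φ₂, QF.rels φ₁ φ₂ ∈ s → φ₂ ∈ s

/-- The constraints on atomic propositions along a transition into state `s`. -/
def atomOk (α : Fin n → Set AP) (s : Set (QF AP n)) : Prop :=
  (∀ a j, QF.atom a j ∈ s → a ∈ α j) ∧
  (∀ a j, QF.neg (QF.atom a j) ∈ s → a ∉ α j)

/-- Transitions of the generalized Büchi automaton `A_ψ` between maximal consistent
sets. -/
def Trans (ψ : QF AP n) (s₁ : Set (QF AP n)) (α : Fin n → Set AP)
    (s₂ : Set (QF AP n)) : Prop :=
  Mcs ψ s₁ ∧ Mcs ψ s₂ ∧ atomOk α s₂ ∧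
  (∀ φ, QF.next φ ∈ s₁ → φ ∈ s₂) ∧
  (∀ φ₁ φ₂, QF.untl φ₁ φ₂ ∈ s₁ → φ₂ ∉ s₁ → QF.untl φ₁ φ₂ ∈ s₂) ∧
  (∀ φ₁ φ₂, QF.rels φ₁ φ₂ ∈ s₁ → negF φ₁ ∈ s₁ → QF.rels φ₁ φ₂ ∈ s₂)

/-- Transitions of `A_ψ` out of the distinct initial state `ι`. -/
def InitTrans (ψ : QF AP n) (α : Fin n → Set AP) (s₂ : Set (QF AP n)) : Prop :=
  Mcs ψ s₂ ∧ atomOk α s₂ ∧ ψ ∈ s₂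

/-- `ι r₀ r₁ …` is an accepting path of `A_ψ` over the word `w`: it starts with a
transition from `ι`, respects the transition relation, and for every until formula in
`cl(ψ)` the corresponding accepting set is visited infinitely often. -/
def AccRun (ψ : QF AP n) (w : ℕ → Fin n → Set AP) (r : ℕ → Set (QF AP n)) : Prop :=
  InitTrans ψ (w 0) (r 0) ∧
  (∀ i, Trans ψ (r i) (w (i + 1)) (r (i + 1))) ∧
  ∀ φ₁ φ₂, Cl ψ (QF.untl φ₁ φ₂) →
    ∀ m, ∃ k, m ≤ k ∧ (negF (QF.untl φ₁ φ₂) ∈ r k ∨ φ₂ ∈ r k)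

/-- The language of the generalized Büchi automaton `A_ψ`. -/
def Lang (ψ : QF AP n) : Set (ℕ → Fin n → Set AP) := { w | ∃ r, AccRun ψ w r }

/-- `zip` turns an n-tuple of traces into a word over the alphabet `(2^AP)ⁿ`. -/
def zipT (Pa : TTuple AP n) : ℕ → Fin n → Set AP := fun i j => Pa j i

/-- `unzip` turns a word over the alphabet `(2^AP)ⁿ` into an n-tuple of traces. -/
def unzipT (w : ℕ → Fin n → Set AP) : TTuple AP n := fun j i => w i j

end QF


namespace QF

variable {AP : Type} {n : ℕ}

lemma drop_drop (Pa : TTuple AP n) (i k : ℕ) :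
    (Pa.drop i).drop k = Pa.drop (i + k) := by
  funext j m; simp [TTuple.drop, Nat.add_assoc]

lemma drop_zero (Pa : TTuple AP n) : Pa.drop 0 = Pa := by
  funext j m; simp [TTuple.drop]

lemma sat_negF (Pa : TTuple AP n) (φ : QF AP n) : sat Pa (negF φ) ↔ ¬ sat Pa φ := by
  cases φ <;> simp [negF, sat]

lemma sat_untl_iff (Pa : TTuple AP n) (i : ℕ) (φ₁ φ₂ : QF AP n) :
    sat (Pa.drop i) (untl φ₁ φ₂) ↔
      ∃ k, sat (Pa.drop (i + k)) φ₂ ∧ ∀ j < k, sat (Pa.drop (i + j)) φ₁ := by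
  simp only [sat, drop_drop]

lemma sat_rels_iff (Pa : TTuple AP n) (i : ℕ) (φ₁ φ₂ : QF AP n) :
    sat (Pa.drop i) (rels φ₁ φ₂) ↔
      ∀ k, ¬ sat (Pa.drop (i + k)) φ₂ → ∃ j < k, sat (Pa.drop (i + j)) φ₁ := by
  simp only [sat, drop_drop]
  push_neg
  constructor
  · intro H k hk
    obtain ⟨j, hj, hA⟩ := H k hk
    exact ⟨j, hj, hA⟩
  · intro H k hk
    obtain ⟨j, hj, hA⟩ := H k hk
    exact ⟨j, hj, hA⟩

/-- The canonical state at time `i`: all closure formulas true at `Π[i,∞]`. -/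
def canon (ψ : QF AP n) (Pa : TTuple AP n) (i : ℕ) : Set (QF AP n) :=
  {φ | Cl ψ φ ∧ sat (Pa.drop i) φ}

lemma canon_mcs (ψ : QF AP n) (Pa : TTuple AP n) (i : ℕ) : Mcs ψ (canon ψ Pa i) := by
  constructor
  · intro φ hφ; exact hφ.1
  · intro φ hcl
    constructor
    · rintro ⟨-, hs⟩ ⟨-, hns⟩
      exact (sat_negF _ _).mp hns hs
    · intro hn
      refine ⟨hcl, ?_⟩
      by_contra hs
      exact hn ⟨Cl.negc hcl, (sat_negF _ _).mpr hs⟩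
  · intro φ₁ φ₂ hcl
    constructor
    · rintro ⟨-, h1, h2⟩; exact ⟨⟨Cl.and_left hcl, h1⟩, ⟨Cl.and_right hcl, h2⟩⟩
    · rintro ⟨⟨-, h1⟩, ⟨-, h2⟩⟩; exact ⟨hcl, h1, h2⟩
  · intro φ₁ φ₂ hcl
    constructor
    · rintro ⟨-, h1 | h2⟩
      · exact Or.inl ⟨Cl.or_left hcl, h1⟩
      · exact Or.inr ⟨Cl.or_right hcl, h2⟩
    · rintro (⟨-, h1⟩ | ⟨-, h2⟩)
      · exact ⟨hcl, Or.inl h1⟩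
      · exact ⟨hcl, Or.inr h2⟩
  · rintro φ₁ φ₂ ⟨hcl, hs⟩
    rw [sat_untl_iff] at hs
    obtain ⟨k, hB, hA⟩ := hs
    cases k with
    | zero => exact Or.inr ⟨Cl.untl_right hcl, hB⟩
    | succ k => exact Or.inl ⟨Cl.untl_left hcl, hA 0 (Nat.succ_pos _)⟩
  · rintro φ₁ φ₂ ⟨hcl, hs⟩
    rw [sat_rels_iff] at hs
    refine ⟨Cl.rels_right hcl, ?_⟩
    by_contra hB
    obtain ⟨j, hj, -⟩ := hs 0 hB
    omega

lemma canon_atomOk (ψ : QF AP n) (Pa : TTuple AP n) (i : ℕ) :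
    atomOk (zipT Pa i) (canon ψ Pa i) := by
  constructor
  · rintro a j ⟨-, hs⟩; exact hs
  · rintro a j ⟨-, hs⟩ hmem; exact hs hmem

lemma canon_trans (ψ : QF AP n) (Pa : TTuple AP n) (i : ℕ) :
    Trans ψ (canon ψ Pa i) (zipT Pa (i + 1)) (canon ψ Pa (i + 1)) := by
  refine ⟨canon_mcs ψ Pa i, canon_mcs ψ Pa (i + 1), canon_atomOk ψ Pa (i + 1),
    ?_, ?_, ?_⟩
  · rintro φ ⟨hcl, hs⟩
    refine ⟨Cl.next_sub hcl, ?_⟩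
    have hs' : sat ((Pa.drop i).drop 1) φ := hs
    rwa [drop_drop] at hs'
  · rintro φ₁ φ₂ ⟨hcl, hs⟩ hnot
    have h2 : ¬ sat (Pa.drop i) φ₂ := fun hh => hnot ⟨Cl.untl_right hcl, hh⟩
    rw [sat_untl_iff] at hs
    obtain ⟨k, hB, hA⟩ := hs
    refine ⟨hcl, ?_⟩
    rw [sat_untl_iff]
    cases k with
    | zero => exact absurd hB h2
    | succ k =>
      refine ⟨k, by rwa [show (i + 1) + k = i + (k + 1) by omega], ?_⟩
      intro j hj
      have := hA (j + 1) (by omega)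
      rwa [show (i + 1) + j = i + (j + 1) by omega]
  · rintro φ₁ φ₂ ⟨hcl, hs⟩ ⟨-, hneg⟩
    have h1 : ¬ sat (Pa.drop i) φ₁ := (sat_negF _ _).mp hneg
    refine ⟨hcl, ?_⟩
    rw [sat_rels_iff] at hs ⊢
    intro k hB
    have hB' : ¬ sat (Pa.drop (i + (k + 1))) φ₂ := by
      rwa [show i + (k + 1) = (i + 1) + k by omega]
    obtain ⟨j, hj, hA⟩ := hs (k + 1) hB'
    cases j with
    | zero => exact absurd hA h1
    | succ j =>
      exact ⟨j, by omega, by rwa [show i + (j + 1) = (i + 1) + j by omega] at hA⟩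

lemma canon_accrun (ψ : QF AP n) (Pa : TTuple AP n) (hs : sat Pa ψ) :
    AccRun ψ (zipT Pa) (canon ψ Pa) := by
  refine ⟨⟨canon_mcs ψ Pa 0, canon_atomOk ψ Pa 0, Cl.base, by rwa [drop_zero]⟩,
    canon_trans ψ Pa, ?_⟩
  intro φ₁ φ₂ hcl m
  by_cases hu : sat (Pa.drop m) (untl φ₁ φ₂)
  · rw [sat_untl_iff] at hu
    obtain ⟨k, hB, -⟩ := hu
    exact ⟨m + k, Nat.le_add_right m k, Or.inr ⟨Cl.untl_right hcl, hB⟩⟩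
  · exact ⟨m, le_refl m, Or.inl ⟨Cl.negc hcl, (sat_negF _ _).mpr hu⟩⟩

lemma run_sound (ψ : QF AP n) (Pa : TTuple AP n) (r : ℕ → Set (QF AP n))
    (hr : AccRun ψ (zipT Pa) r) :
    ∀ φ, NNF φ → ∀ i, φ ∈ r i → sat (Pa.drop i) φ := by
  obtain ⟨hinit, htrans, hacc⟩ := hr
  have hmcs : ∀ i, Mcs ψ (r i) := fun i => (htrans i).1
  have hatom : ∀ i, atomOk (zipT Pa i) (r i) := by
    intro i
    cases i with
    | zero => exact hinit.2.1
    | succ i => exact (htrans i).2.2.1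
  intro φ
  induction φ with
  | atom a j => exact fun _ i hm => (hatom i).1 a j hm
  | neg φ ih =>
    intro hn i hm
    cases φ with
    | atom a j => exact (hatom i).2 a j hm
    | neg φ => exact absurd hn (by simp [NNF])
    | or φ₁ φ₂ => exact absurd hn (by simp [NNF])
    | and φ₁ φ₂ => exact absurd hn (by simp [NNF])
    | next φ => exact absurd hn (by simp [NNF])
    | untl φ₁ φ₂ => exact absurd hn (by simp [NNF])
    | rels φ₁ φ₂ => exact absurd hn (by simp [NNF])
  | or φ₁ φ₂ ih₁ ih₂ =>
    intro hn i hm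
    rcases ((hmcs i).or_mem φ₁ φ₂ ((hmcs i).subset _ hm)).mp hm with h | h
    · exact Or.inl (ih₁ hn.1 i h)
    · exact Or.inr (ih₂ hn.2 i h)
  | and φ₁ φ₂ ih₁ ih₂ =>
    intro hn i hm
    have := ((hmcs i).and_mem φ₁ φ₂ ((hmcs i).subset _ hm)).mp hm
    exact ⟨ih₁ hn.1 i this.1, ih₂ hn.2 i this.2⟩
  | next φ ih =>
    intro hn i hm
    have hs := ih hn (i + 1) ((htrans i).2.2.2.1 φ hm)
    show sat ((Pa.drop i).drop 1) φ
    rwa [drop_drop]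
  | untl φ₁ φ₂ ih₁ ih₂ =>
    intro hn i hm
    have hcl : Cl ψ (untl φ₁ φ₂) := (hmcs i).subset _ hm
    have key : ∀ d i, untl φ₁ φ₂ ∈ r i →
        (negF (untl φ₁ φ₂) ∈ r (i + d) ∨ φ₂ ∈ r (i + d)) →
        ∃ k ≤ d, φ₂ ∈ r (i + k) ∧ ∀ j < k, φ₁ ∈ r (i + j) := by
      intro d
      induction d with
      | zero =>
        intro i hu hend
        rcases hend with hneg | h2
        · exact absurd hneg (((hmcs i).maximal _ hcl).mp hu)
        · exact ⟨0, le_refl 0, h2, fun j hj => absurd hj (Nat.not_lt_zero j)⟩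
      | succ d ihd =>
        intro i hu hend
        by_cases h2 : φ₂ ∈ r i
        · exact ⟨0, Nat.zero_le _, h2, fun j hj => absurd hj (Nat.not_lt_zero j)⟩
        · have h1 : φ₁ ∈ r i := ((hmcs i).untl_mem φ₁ φ₂ hu).resolve_right h2
          have hu' : untl φ₁ φ₂ ∈ r (i + 1) := (htrans i).2.2.2.2.1 φ₁ φ₂ hu h2
          have hend' : negF (untl φ₁ φ₂) ∈ r ((i + 1) + d) ∨ φ₂ ∈ r ((i + 1) + d) := by
            rwa [show (i + 1) + d = i + (d + 1) by omega]
          obtain ⟨k, hk, hφ₂, hφ₁⟩ := ihd (i + 1) hu' hend'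
          refine ⟨k + 1, by omega, by rwa [show i + (k + 1) = (i + 1) + k by omega], ?_⟩
          intro j hj
          cases j with
          | zero => exact h1
          | succ j =>
            have := hφ₁ j (by omega)
            rwa [show i + (j + 1) = (i + 1) + j by omega]
    obtain ⟨K, hK, hend⟩ := hacc φ₁ φ₂ hcl i
    obtain ⟨k, -, hφ₂, hφ₁⟩ := key (K - i) i hm (by rwa [show i + (K - i) = K by omega])
    rw [sat_untl_iff]
    exact ⟨k, ih₂ hn.2 _ hφ₂, fun j hj => ih₁ hn.1 _ (hφ₁ j hj)⟩
  | rels φ₁ φ₂ ih₁ ih₂ =>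
    intro hn i hm
    have hpers : ∀ k, (∀ j < k, ¬ sat (Pa.drop (i + j)) φ₁) → rels φ₁ φ₂ ∈ r (i + k) := by
      intro k
      induction k with
      | zero => exact fun _ => hm
      | succ k ihk =>
        intro hks
        have hrk := ihk fun j hj => hks j (by omega)
        have h1 : φ₁ ∉ r (i + k) := fun hmem => hks k (by omega) (ih₁ hn.1 _ hmem)
        have hn1 : negF φ₁ ∈ r (i + k) := by
          by_contra hn1
          exact h1 (((hmcs (i + k)).maximal φ₁
            (Cl.rels_left ((hmcs (i + k)).subset _ hrk))).mpr hn1)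
        exact (htrans (i + k)).2.2.2.2.2 φ₁ φ₂ hrk hn1
    rw [sat_rels_iff]
    intro k hB
    by_contra hnoA
    push_neg at hnoA
    exact hB (ih₂ hn.2 _ ((hmcs (i + k)).rels_mem φ₁ φ₂ (hpers k hnoA)))

end QF

/-- **Correctness of the formula automaton**: for a quantifier-free HyperLTL formula ψ in
negation normal form over trace variables π₁, …, πₙ and its generalized Büchi automaton
A_ψ, and for every n-tuple Π of traces, `Π ⊨_∅ ψ` iff `zip(Π) ∈ L(A_ψ)`. -/
theorem formula_automaton_correct (AP : Type) (n : ℕ) (ψ : QF AP n) (h : ψ.NNF)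
    (Pa : TTuple AP n) :
    QF.sat Pa ψ ↔ QF.zipT Pa ∈ QF.Lang ψ := by
  constructor
  · intro hs
    exact ⟨QF.canon ψ Pa, QF.canon_accrun ψ Pa hs⟩
  · rintro ⟨r, hr⟩
    have := QF.run_sound ψ Pa r hr ψ h 0 hr.1.2.2
    rwa [QF.drop_zero] at this
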